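/- Value-gradient resolvent identity: for every θ and every state s, the gradient of the value function satisfies the linear recursion ∇_θ v_θ(s) = Σ_{a∈A} [∇_θ π_θ(a|s)] q_θ(s,a) + Σ_{s'∈S} P_{θ,γ}(s,s') ∇_θ v_θ(s'); consequently, writing V_θ for the |S|×d matrix whose row indexed by s is ∇_θ v_θ(s)ᵀ and G for the |S|×d matrix whose row indexed by s is g(s)ᵀ with g(s) = Σ_{a∈A} [∇_θ π_θ(a|s)] q_θ(s,a), one has V_θ = (I − P_{θ,γ})⁻¹ G. -/

import Mathlib

/-!
The Bellman equation gives `v_θ(s) = ∑_a π_θ(a|s) q_θ(s,a)`, and `∇_θ q_θ(s,a)` is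
`γ ∑_{s'} P(s'|s,a) ∇_θ v_θ(s')`; the product rule then yields the recursion. Since the rows of
`P_{θ,γ}` are nonnegative with sum `γ < 1`, the matrix `I - P_{θ,γ}` is strictly diagonally
dominant, hence invertible, and the recursion can be solved for the gradients. Differentiability
of `v_θ` comes from Cramer's rule, which writes its entries as rational functions of `π_θ`.
-/

open Matrix

namespace Matrix

variable {n R E : Type*} [Fintype n] [CommRing R] [AddCommGroup E] [Module R E]

theorem sum_smul_sum_smul (A B : Matrix n n R) (x : n → E) (i : n) :
    ∑ j, A i j • ∑ k, B j k • x k = ∑ k, (A * B) i k • x k := by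
  simp only [Finset.smul_sum, smul_smul, mul_apply, Finset.sum_smul]
  exact Finset.sum_comm

variable [DecidableEq n]

theorem det_one_sub_ne_zero_of_sum_norm_lt_one {K : Type*} [NormedField K] {M : Matrix n n K}
    (hM : ∀ i, ∑ j, ‖M i j‖ < 1) : (1 - M).det ≠ 0 := by
  refine det_ne_zero_of_sum_row_lt_diag fun i => ?_
  have hsplit := Finset.add_sum_erase Finset.univ (fun j => ‖M i j‖) (Finset.mem_univ i)
  calc ∑ j ∈ Finset.univ.erase i, ‖(1 - M) i j‖ = ∑ j ∈ Finset.univ.erase i, ‖M i j‖ :=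
        Finset.sum_congr rfl fun j hj => by
          rw [sub_apply, one_apply_ne (Finset.ne_of_mem_erase hj).symm, zero_sub, norm_neg]
    _ < 1 - ‖M i i‖ := by linarith [hM i]
    _ ≤ ‖(1 - M) i i‖ := by
      rw [sub_apply, one_apply_eq]
      simpa using norm_sub_norm_le (1 : K) (M i i)

theorem sum_one_smul (x : n → E) (i : n) : ∑ j, (1 : Matrix n n R) i j • x j = x i := by
  simp [one_apply, ite_smul]

theorem sum_one_sub_smul (M : Matrix n n R) (x : n → E) (i : n) :
    ∑ j, (1 - M) i j • x j = x i - ∑ j, M i j • x j := by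
  simp only [sub_apply, sub_smul, Finset.sum_sub_distrib, sum_one_smul]

theorem forall_eq_add_sum_smul_iff {M : Matrix n n R} (hM : IsUnit (1 - M).det) (x y : n → E) :
    (∀ i, x i = y i + ∑ j, M i j • x j) ↔ ∀ i, x i = ∑ j, (1 - M)⁻¹ i j • y j := by
  have hy : (∀ i, x i = y i + ∑ j, M i j • x j) ↔ ∀ i, y i = ∑ j, (1 - M) i j • x j := by
    simp only [sum_one_sub_smul, eq_sub_iff_add_eq, eq_comm (a := x _), add_comm (y _)]
  rw [hy]
  constructor
  · intro h i
    simp only [h, sum_smul_sum_smul, nonsing_inv_mul _ hM, sum_one_smul]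
  · intro h i
    simp only [h, sum_smul_sum_smul, mul_nonsing_inv _ hM, sum_one_smul]

end Matrix

section MatrixCalculus

variable {𝕜 E n : Type*} [NontriviallyNormedField 𝕜] [NormedAddCommGroup E] [NormedSpace 𝕜 E]
  [Fintype n] [DecidableEq n] {M : E → Matrix n n 𝕜} {x : E}

theorem DifferentiableAt.matrix_det (hM : ∀ i j, DifferentiableAt 𝕜 (fun y => M y i j) x) :
    DifferentiableAt 𝕜 (fun y => (M y).det) x := by
  simp only [det_apply']
  exact DifferentiableAt.fun_sum fun σ _ => (HasFDerivAt.finsetProd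
    fun i _ => (hM (σ i) i).hasFDerivAt).differentiableAt.const_mul _

theorem DifferentiableAt.inv_mulVec_apply {b : E → n → 𝕜}
    (hM : ∀ i j, DifferentiableAt 𝕜 (fun y => M y i j) x)
    (hb : ∀ i, DifferentiableAt 𝕜 (fun y => b y i) x) (hdet : (M x).det ≠ 0) (i : n) :
    DifferentiableAt 𝕜 (fun y => ((M y)⁻¹ *ᵥ b y) i) x := by
  -- Cramer's rule; where `M y` is singular both sides are the junk value `0`.
  have hcramer : ∀ y, ((M y)⁻¹ *ᵥ b y) i = ((M y).det)⁻¹ * ((M y).updateCol i (b y)).det := by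
    intro y
    by_cases hy : IsUnit (M y).det
    · rw [← cramer_apply, ← det_smul_inv_mulVec_eq_cramer _ _ hy, Pi.smul_apply, smul_eq_mul,
        inv_mul_cancel_left₀ hy.ne_zero]
    · rw [nonsing_inv_apply_not_isUnit _ hy, zero_mulVec, isUnit_iff_ne_zero.not_left.mp hy,
        _root_.inv_zero, zero_mul, Pi.zero_apply]
  simp only [hcramer]
  refine ((DifferentiableAt.matrix_det hM).inv hdet).mul (DifferentiableAt.matrix_det fun j k => ?_)
  simp only [updateCol_apply]
  split_ifs
  exacts [hb j, hM j k]

end MatrixCalculus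

section DiscountedMDP

variable {S A : Type*} [Fintype S] [DecidableEq S] [Fintype A]
  {P : S → A → S → ℝ} {rbar : S → A → ℝ} {γ : ℝ}

theorem isUnit_det_one_sub_discountedKernel {π : S → A → ℝ} {M : Matrix S S ℝ}
    (hP0 : ∀ s a s', 0 ≤ P s a s') (hP1 : ∀ s a, ∑ s', P s a s' = 1)
    (hγ0 : 0 ≤ γ) (hγ1 : γ < 1) (hπ0 : ∀ s a, 0 ≤ π s a) (hπ1 : ∀ s, ∑ a, π s a = 1)
    (hM : ∀ s s', M s s' = γ * ∑ a, π s a * P s a s') :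
    IsUnit (1 - M).det := by
  refine isUnit_iff_ne_zero.mpr (det_one_sub_ne_zero_of_sum_norm_lt_one fun s => ?_)
  have hnonneg : ∀ s', 0 ≤ M s s' := fun s' => by
    rw [hM]
    exact mul_nonneg hγ0 (Finset.sum_nonneg fun a _ => mul_nonneg (hπ0 s a) (hP0 s a s'))
  calc ∑ s', ‖M s s'‖ = ∑ s', M s s' := by
        simp only [Real.norm_eq_abs, abs_of_nonneg (hnonneg _)]
    _ = γ * ∑ a, π s a * ∑ s', P s a s' := by
        simp only [hM, ← Finset.mul_sum, Finset.sum_comm (γ := S)]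
    _ < 1 := by simpa only [hP1, mul_one, hπ1]

theorem value_eq_sum_policy_mul_actionValue {π : S → A → ℝ} {M : Matrix S S ℝ}
    {v : S → ℝ} {q : S → A → ℝ} (hM : ∀ s s', M s s' = γ * ∑ a, π s a * P s a s')
    (hunit : IsUnit (1 - M).det) (hv : v = (1 - M)⁻¹ *ᵥ fun s => ∑ a, π s a * rbar s a)
    (hq : ∀ s a, q s a = rbar s a + γ * ∑ s', P s a s' * v s') (s : S) :
    v s = ∑ a, π s a * q s a := by
  have hbellman := (forall_eq_add_sum_smul_iff hunit v fun s => ∑ a, π s a * rbar s a).mpr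
    (fun s => by simp [hv, mulVec, dotProduct]) s
  simp only [hbellman, hq, hM, smul_eq_mul, Finset.sum_mul, mul_add, Finset.sum_add_distrib,
    Finset.mul_sum]
  rw [Finset.sum_comm]
  exact congrArg _ (Finset.sum_congr rfl fun _ _ => Finset.sum_congr rfl fun _ _ => by ring)

variable {E : Type*} [NormedAddCommGroup E] [NormedSpace ℝ E]
  {π : E → S → A → ℝ} {Pγ : E → Matrix S S ℝ} {v : E → S → ℝ} {θ : E}

theorem differentiableAt_value (hπ : ∀ s a, DifferentiableAt ℝ (fun θ => π θ s a) θ)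
    (hPγ : ∀ θ s s', Pγ θ s s' = γ * ∑ a, π θ s a * P s a s')
    (hv : ∀ θ, v θ = (1 - Pγ θ)⁻¹ *ᵥ fun s => ∑ a, π θ s a * rbar s a)
    (hdet : (1 - Pγ θ).det ≠ 0) (s : S) :
    DifferentiableAt ℝ (fun θ => v θ s) θ := by
  simp only [hv]
  refine DifferentiableAt.inv_mulVec_apply (fun s s' => ?_)
    (fun s => DifferentiableAt.fun_sum fun a _ => (hπ s a).mul_const _) hdet s
  simp only [Matrix.sub_apply, hPγ]
  exact (differentiableAt_const _).sub
    ((DifferentiableAt.fun_sum fun a _ => (hπ s a).mul_const _).const_mul _)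

theorem fderiv_value {q : E → S → A → ℝ} (hπ : ∀ s a, DifferentiableAt ℝ (fun θ => π θ s a) θ)
    (hPγ : ∀ θ s s', Pγ θ s s' = γ * ∑ a, π θ s a * P s a s')
    (hunit : ∀ θ, IsUnit (1 - Pγ θ).det)
    (hv : ∀ θ, v θ = (1 - Pγ θ)⁻¹ *ᵥ fun s => ∑ a, π θ s a * rbar s a)
    (hq : ∀ θ s a, q θ s a = rbar s a + γ * ∑ s', P s a s' * v θ s') (s : S) :
    fderiv ℝ (fun θ => v θ s) θ = ∑ a, q θ s a • fderiv ℝ (fun θ => π θ s a) θ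
      + ∑ s', Pγ θ s s' • fderiv ℝ (fun θ => v θ s') θ := by
  have hvq : (fun θ => v θ s) = fun θ => ∑ a, π θ s a * q θ s a := funext fun θ =>
    value_eq_sum_policy_mul_actionValue (hPγ θ) (hunit θ) (hv θ) (hq θ) s
  have hvd : ∀ s', HasFDerivAt (fun θ => v θ s') (fderiv ℝ (fun θ => v θ s') θ) θ := fun s' =>
    (differentiableAt_value hπ hPγ hv (hunit θ).ne_zero s').hasFDerivAt
  have hqd : ∀ a, HasFDerivAt (fun θ => q θ s a)
      (γ • ∑ s', P s a s' • fderiv ℝ (fun θ => v θ s') θ) θ := fun a => by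
    simp only [hq]
    exact ((HasFDerivAt.fun_sum fun s' _ => (hvd s').const_mul (P s a s')).const_mul γ).const_add _
  have hsum := HasFDerivAt.fun_sum (u := Finset.univ) fun a _ =>
    (hπ s a).hasFDerivAt.fun_mul (hqd a)
  rw [hvq, hsum.fderiv, Finset.sum_add_distrib, add_comm]
  congr 1
  simp only [hPγ, Finset.smul_sum, smul_smul, Finset.mul_sum, Finset.sum_smul]
  rw [Finset.sum_comm]
  exact Finset.sum_congr rfl fun _ _ => Finset.sum_congr rfl fun _ _ => by rw [mul_left_comm]

end DiscountedMDP

theorem value_gradient_resolvent_identity_general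
    {S A : Type*} [Fintype S] [DecidableEq S] [Fintype A]
    (d : ℕ)
    (P : S → A → S → ℝ)
    (hP0 : ∀ s a s', 0 ≤ P s a s') (hP1 : ∀ s a, ∑ s', P s a s' = 1)
    (rbar : S → A → ℝ)
    (γ : ℝ) (hγ0 : 0 < γ) (hγ1 : γ < 1)
    (π : EuclideanSpace ℝ (Fin d) → S → A → ℝ)
    (hπ0 : ∀ θ s a, 0 ≤ π θ s a)
    (hπ1 : ∀ θ s, ∑ a, π θ s a = 1)
    (hπC1 : ∀ s a, ContDiff ℝ 1 (fun θ => π θ s a))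
    (Pγ : EuclideanSpace ℝ (Fin d) → Matrix S S ℝ)
    (hPγ : ∀ θ s s', Pγ θ s s' = γ * ∑ a, π θ s a * P s a s')
    (v : EuclideanSpace ℝ (Fin d) → S → ℝ)
    (hv : ∀ θ, v θ = (1 - Pγ θ)⁻¹ *ᵥ (fun s => ∑ a, π θ s a * rbar s a))
    (q : EuclideanSpace ℝ (Fin d) → S → A → ℝ)
    (hq : ∀ θ s a, q θ s a = rbar s a + γ * ∑ s', P s a s' * v θ s')
    (θ : EuclideanSpace ℝ (Fin d)) :
    (∀ s, fderiv ℝ (fun θ' => v θ' s) θ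
        = ∑ a, q θ s a • fderiv ℝ (fun θ' => π θ' s a) θ
          + ∑ s', Pγ θ s s' • fderiv ℝ (fun θ' => v θ' s') θ)
    ∧ ∀ s, fderiv ℝ (fun θ' => v θ' s) θ
        = ∑ s', (1 - Pγ θ)⁻¹ s s' •
            (∑ a, q θ s' a • fderiv ℝ (fun θ' => π θ' s' a) θ) := by
  have hunit : ∀ θ, IsUnit (1 - Pγ θ).det := fun θ =>
    isUnit_det_one_sub_discountedKernel hP0 hP1 hγ0.le hγ1 (hπ0 θ) (hπ1 θ) (hPγ θ)
  have hπd : ∀ s a, DifferentiableAt ℝ (fun θ => π θ s a) θ := fun s a =>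
    ((hπC1 s a).differentiable one_ne_zero).differentiableAt
  have hrecursion := fderiv_value hπd hPγ hunit hv hq
  exact ⟨hrecursion, (forall_eq_add_sum_smul_iff (hunit θ) _ _).mp hrecursion⟩

/-- Value-gradient resolvent identity: for every `θ` and state `s`,
`∇_θ v_θ(s) = ∑_a [∇_θ π_θ(a|s)] q_θ(s,a) + ∑_{s'} P_{θ,γ}(s,s') ∇_θ v_θ(s')`,
and consequently `V_θ = (I − P_{θ,γ})⁻¹ G` row-wise. -/
theorem value_gradient_resolvent_identity
    {S A : Type*} [Fintype S] [Nonempty S] [DecidableEq S] [Fintype A] [Nonempty A]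
    (d : ℕ)
    (P : S → A → S → ℝ)
    (hP0 : ∀ s a s', 0 ≤ P s a s') (hP1 : ∀ s a, ∑ s', P s a s' = 1)
    (rbar : S → A → ℝ)
    (γ : ℝ) (hγ0 : 0 < γ) (hγ1 : γ < 1)
    (π : EuclideanSpace ℝ (Fin d) → S → A → ℝ)
    (hπ0 : ∀ θ s a, 0 ≤ π θ s a)
    (hπ1 : ∀ θ s, ∑ a, π θ s a = 1)
    (hπC1 : ∀ s a, ContDiff ℝ 1 (fun θ => π θ s a))
    (Pγ : EuclideanSpace ℝ (Fin d) → Matrix S S ℝ)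
    (hPγ : ∀ θ s s', Pγ θ s s' = γ * ∑ a, π θ s a * P s a s')
    (v : EuclideanSpace ℝ (Fin d) → S → ℝ)
    (hv : ∀ θ, v θ = (1 - Pγ θ)⁻¹ *ᵥ (fun s => ∑ a, π θ s a * rbar s a))
    (q : EuclideanSpace ℝ (Fin d) → S → A → ℝ)
    (hq : ∀ θ s a, q θ s a = rbar s a + γ * ∑ s', P s a s' * v θ s')
    (θ : EuclideanSpace ℝ (Fin d)) :
    (∀ s, fderiv ℝ (fun θ' => v θ' s) θ
        = ∑ a, q θ s a • fderiv ℝ (fun θ' => π θ' s a) θ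
          + ∑ s', Pγ θ s s' • fderiv ℝ (fun θ' => v θ' s') θ)
    ∧ ∀ s, fderiv ℝ (fun θ' => v θ' s) θ
        = ∑ s', (1 - Pγ θ)⁻¹ s s' •
            (∑ a, q θ s' a • fderiv ℝ (fun θ' => π θ' s' a) θ) :=
  value_gradient_resolvent_identity_general d P hP0 hP1 rbar γ hγ0 hγ1 π hπ0 hπ1 hπC1 Pγ hPγ v hv q
    hq θ
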